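/- For every ε > 0 and every rooted graph F, there exists a positive integer m such that for every n ≥ m and every string a = a₁…aₙ ∈ ℕⁿ, there exists k ∈ {1,…,m} with λ₁(F, a₁…a_{k-1} 0 a_k…aₙ) < λ₁(F, a) + ε. -/

import Mathlib

/-- A rooted graph: a finite simple graph with a distinguished root vertex. -/
structure RootedGraph where
  V : Type
  [fintypeV : Fintype V]
  G : SimpleGraph V
  root : V

attribute [instance] RootedGraph.fintypeV

/-- One-step extension of a rooted graph: attach a new path vertex (the new root)
to the old root, together with a clique of `k` new vertices each adjacent to
both the old root and the new path vertex. -/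
def RootedGraph.extend (F : RootedGraph) (k : ℕ) : RootedGraph where
  V := F.V ⊕ Option (Fin k)
  G :=
    { Adj := fun a b =>
        match a, b with
        | Sum.inl u, Sum.inl w => F.G.Adj u w
        | Sum.inl u, Sum.inr _ => u = F.root
        | Sum.inr _, Sum.inl w => w = F.root
        | Sum.inr x, Sum.inr y => x ≠ y
      symm := ⟨by
        rintro (u | x) (w | y) h
        · exact F.G.adj_symm h
        · exact h
        · exact h
        · exact h.symm⟩
      loopless := ⟨by
        rintro (u | x) h
        · exact F.G.irrefl h
        · exact h rfl⟩ }
  root := Sum.inr none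

/-- The rowing graph `(F, a)`. -/
def RootedGraph.rowing (F : RootedGraph) (a : List ℕ) : RootedGraph :=
  a.foldl RootedGraph.extend F

open scoped Classical in
/-- Adjacency matrix of (the graph of) a rooted graph. -/
noncomputable def RootedGraph.adjMat (F : RootedGraph) : Matrix F.V F.V ℝ :=
  Matrix.of fun u v => if F.G.Adj u v then 1 else 0

/-- The smallest adjacency eigenvalue of a rooted graph. -/
noncomputable def RootedGraph.lam1 (F : RootedGraph) : ℝ :=
  sInf {t : ℝ | ∃ x : F.V → ℝ, x ≠ 0 ∧ F.adjMat.mulVec x = t • x}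

/-!
Let `x` be an eigenvector for `λ₁(F, a)` with `‖x‖² = N`. The path vertices `v₀, …, v_{m-1}` are
distinct, so one of them carries `t = x(vⱼ)² ≤ N / m`. Inserting a `0` at position `j + 1` splits
`vⱼ` into an edge `vⱼvⱼ'`; copying `x(vⱼ)` to both ends gives a test vector of squared norm `N + t`
and Rayleigh numerator `λ₁(F, a) N + 2t`, whence `λ₁(F, a') (N + t) ≤ λ₁(F, a) N + 2t`. Each clique
on `{v_{i-1}, vᵢ} ∪ Kᵢ` contributes `(∑ x)² - ∑ x² ≥ -∑ x²` to the quadratic form and every vertex lies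
in at most two such cliques, so `λ₁(F, a) ≥ -(|λ₁(F)| + 2)` independently of `a`. Hence the increase
is at most `(|λ₁(F)| + 4) t / N ≤ (|λ₁(F)| + 4) / m < ε` for large `m`.
-/

open Matrix

namespace Matrix

variable {n : Type*} [Fintype n] [DecidableEq n]

theorem setOf_exists_mulVec_eq_smul_eq_spectrum {K : Type*} [Field K] (A : Matrix n n K) :
    {t : K | ∃ x : n → K, x ≠ 0 ∧ A *ᵥ x = t • x} = spectrum K A := by
  ext t
  rw [Set.mem_ofPred_eq, ← spectrum_toLin', ← Module.End.hasEigenvalue_iff_mem_spectrum]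
  constructor
  · rintro ⟨x, hx, hAx⟩
    exact Module.End.hasEigenvalue_of_hasEigenvector
      ⟨Module.End.mem_eigenspace_iff.mpr (by simpa using hAx), hx⟩
  · intro h
    obtain ⟨x, hx⟩ := h.exists_hasEigenvector
    exact ⟨x, hx.2, by simpa using hx.apply_eq_smul⟩

variable {A : Matrix n n ℝ}

theorem IsHermitian.sInf_spectrum_mul_le (hA : A.IsHermitian) (x : n → ℝ) :
    sInf (spectrum ℝ A) * (x ⬝ᵥ x) ≤ x ⬝ᵥ A *ᵥ x := by
  have hpsd : (A - algebraMap ℝ _ (sInf (spectrum ℝ A))).PosSemidef := by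
    refine posSemidef_iff_isHermitian_and_spectrum_nonneg.mpr ⟨?_, ?_⟩
    · exact hA.sub (isHermitian_diagonal _)
    · rw [← spectrum.sub_singleton_eq]
      rintro _ ⟨t, ht, s, rfl, rfl⟩
      exact sub_nonneg.mpr (csInf_le A.finite_real_spectrum.bddBelow ht)
  have := hpsd.dotProduct_mulVec_nonneg x
  rw [Algebra.algebraMap_eq_smul_one, sub_mulVec, smul_mulVec, one_mulVec, dotProduct_sub,
    dotProduct_smul, star_trivial, smul_eq_mul, sub_nonneg] at this
  exact this

theorem IsHermitian.sInf_spectrum_mem [Nonempty n] (hA : A.IsHermitian) :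
    sInf (spectrum ℝ A) ∈ spectrum ℝ A := by
  refine Set.Nonempty.csInf_mem ?_ A.finite_real_spectrum
  rw [hA.spectrum_real_eq_range_eigenvalues]
  exact Set.range_nonempty _

end Matrix

theorem Finset.sum_sum_ite_ne_mul {ι R : Type*} [Fintype ι] [DecidableEq ι] [CommRing R]
    (f : ι → R) :
    ∑ s, ∑ t, (if s ≠ t then f s * f t else 0) = (∑ s, f s) ^ 2 - ∑ s, f s ^ 2 := by
  have h : ∀ s t, (if s ≠ t then f s * f t else 0) = f s * f t - if s = t then f s * f t else 0 := by
    intro s t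
    split_ifs <;> simp_all
  simp only [h, Finset.sum_sub_distrib, Finset.sum_ite_eq, Finset.mem_univ, if_true, sq,
    Finset.sum_mul_sum]

theorem dotProduct_self_eq_sum_sq {ι R : Type*} [Fintype ι] [Semiring R] (x : ι → R) :
    x ⬝ᵥ x = ∑ i, x i ^ 2 := by
  simp [dotProduct, sq]

namespace RootedGraph

open scoped Classical in
noncomputable def adjForm (F : RootedGraph) (x : F.V → ℝ) : ℝ :=
  ∑ u, ∑ v, if F.G.Adj u v then x u * x v else 0

theorem dotProduct_adjMat_mulVec (F : RootedGraph) (x : F.V → ℝ) :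
    x ⬝ᵥ F.adjMat *ᵥ x = F.adjForm x := by
  simp [dotProduct, mulVec, adjMat, adjForm, Finset.mul_sum, mul_comm]

theorem adjMat_isHermitian (F : RootedGraph) : F.adjMat.IsHermitian := by
  classical
  rw [isHermitian_iff_isSymm]
  ext u v
  exact if_congr (F.G.adj_comm v u) rfl rfl

theorem lam1_eq_sInf_spectrum (F : RootedGraph) [DecidableEq F.V] :
    F.lam1 = sInf (spectrum ℝ F.adjMat) := by
  rw [lam1, setOf_exists_mulVec_eq_smul_eq_spectrum]

theorem lam1_mul_sum_sq_le_adjForm (F : RootedGraph) (x : F.V → ℝ) :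
    F.lam1 * ∑ v, x v ^ 2 ≤ F.adjForm x := by
  classical
  have := F.adjMat_isHermitian.sInf_spectrum_mul_le x
  rwa [← lam1_eq_sInf_spectrum, dotProduct_adjMat_mulVec, dotProduct_self_eq_sum_sq] at this

theorem exists_adjForm_eq_lam1_mul (F : RootedGraph) :
    ∃ x : F.V → ℝ, 0 < ∑ v, x v ^ 2 ∧ F.adjForm x = F.lam1 * ∑ v, x v ^ 2 := by
  classical
  have : Nonempty F.V := ⟨F.root⟩
  have hmem := F.adjMat_isHermitian.sInf_spectrum_mem
  rw [← lam1_eq_sInf_spectrum, ← setOf_exists_mulVec_eq_smul_eq_spectrum] at hmem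
  obtain ⟨x, hx, hAx⟩ := hmem
  refine ⟨x, ?_, ?_⟩
  · simpa [dotProduct_self_eq_sum_sq] using dotProduct_star_self_pos_iff.mpr hx
  · rw [← dotProduct_adjMat_mulVec, hAx, dotProduct_smul, smul_eq_mul, dotProduct_self_eq_sum_sq]

section extend

variable (F : RootedGraph) (k : ℕ)

@[simp] theorem extend_adj_inl_inl (u w : F.V) :
    (F.extend k).G.Adj (Sum.inl u) (Sum.inl w) ↔ F.G.Adj u w := Iff.rfl

@[simp] theorem extend_adj_inl_inr (u : F.V) (t : Option (Fin k)) :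
    (F.extend k).G.Adj (Sum.inl u) (Sum.inr t) ↔ u = F.root := Iff.rfl

@[simp] theorem extend_adj_inr_inl (t : Option (Fin k)) (u : F.V) :
    (F.extend k).G.Adj (Sum.inr t) (Sum.inl u) ↔ u = F.root := Iff.rfl

@[simp] theorem extend_adj_inr_inr (s t : Option (Fin k)) :
    (F.extend k).G.Adj (Sum.inr s) (Sum.inr t) ↔ s ≠ t := Iff.rfl

theorem sum_extend {M : Type*} [AddCommMonoid M] (f : (F.extend k).V → M) :
    ∑ v, f v = ∑ u, f (Sum.inl u) + ∑ t, f (Sum.inr t) :=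
  Fintype.sum_sum_type f

theorem adjForm_extend (y : (F.extend k).V → ℝ) :
    (F.extend k).adjForm y = F.adjForm (fun u => y (Sum.inl u))
      + 2 * y (Sum.inl F.root) * ∑ t, y (Sum.inr t)
      + ((∑ t, y (Sum.inr t)) ^ 2 - ∑ t, y (Sum.inr t) ^ 2) := by
  classical
  rw [← Finset.sum_sum_ite_ne_mul]
  simp only [adjForm, sum_extend, extend_adj_inl_inl, extend_adj_inl_inr, extend_adj_inr_inl,
    extend_adj_inr_inr, Finset.sum_ite_irrel, Finset.sum_const_zero, Finset.sum_ite_eq',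
    Finset.mem_univ, if_true, Finset.sum_add_distrib]
  simp only [← Finset.sum_mul, ← Finset.mul_sum]
  ring

end extend

def rowingIncl : (b : List ℕ) → (H : RootedGraph) → H.V → (H.rowing b).V
  | [], _ => id
  | c :: b, H => fun v => rowingIncl b (H.extend c) (Sum.inl v)

def extendMap {H H' : RootedGraph} (g : H'.V → H.V) (c : ℕ) :
    (H'.extend c).V → (H.extend c).V :=
  Sum.map g id

@[simp] theorem extendMap_inl {H H' : RootedGraph} (g : H'.V → H.V) (c : ℕ) (u : H'.V) :
    extendMap g c (Sum.inl u) = Sum.inl (g u) := rfl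

@[simp] theorem extendMap_inr {H H' : RootedGraph} (g : H'.V → H.V) (c : ℕ) (t : Option (Fin c)) :
    extendMap g c (Sum.inr t) = Sum.inr t := rfl

def rowingMap : (b : List ℕ) → {H H' : RootedGraph} → (H'.V → H.V) →
    (H'.rowing b).V → (H.rowing b).V
  | [], _, _, g => g
  | c :: b, _, _, g => rowingMap b (extendMap g c)

-- `pathVertex a F j` is the path vertex `vⱼ` of `(F, a)`; for `j > a.length` it is junk.
def pathVertex : (a : List ℕ) → (F : RootedGraph) → ℕ → (F.rowing a).V
  | a, F, 0 => rowingIncl a F F.root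
  | [], F, _ + 1 => F.root
  | c :: a, F, j + 1 => pathVertex a (F.extend c) j

theorem pathVertex_zero (a : List ℕ) (F : RootedGraph) :
    pathVertex a F 0 = rowingIncl a F F.root := by
  cases a <;> rfl

theorem rowingIncl_injective (b : List ℕ) (H : RootedGraph) :
    Function.Injective (rowingIncl b H) := by
  induction b generalizing H with
  | nil => exact Function.injective_id
  | cons c b ih => exact (ih (H.extend c)).comp Sum.inl_injective

theorem rowingIncl_ne_pathVertex (a : List ℕ) (F : RootedGraph) (u : F.V) {j : ℕ}
    (hj₁ : 1 ≤ j) (hj : j ≤ a.length) : rowingIncl a F u ≠ pathVertex a F j := by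
  induction a generalizing F u j with
  | nil => simp at hj; omega
  | cons c a ih =>
    match j with
    | 1 =>
      rw [pathVertex, pathVertex_zero]
      exact (rowingIncl_injective a (F.extend c)).ne Sum.inl_ne_inr
    | j + 2 => exact ih (F.extend c) (Sum.inl u) (by omega) (by simpa using hj)

theorem pathVertex_injOn (a : List ℕ) (F : RootedGraph) :
    Set.InjOn (pathVertex a F) (Set.Iic a.length) := by
  induction a generalizing F with
  | nil => intro i hi j hj _; simp_all
  | cons c a ih =>
    intro i hi j hj h
    simp only [Set.mem_Iic, List.length_cons] at hi hj
    match i, j with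
    | 0, 0 => rfl
    | 0, j + 1 => exact absurd h (rowingIncl_ne_pathVertex _ F F.root (by omega) hj)
    | i + 1, 0 => exact absurd h.symm (rowingIncl_ne_pathVertex _ F F.root (by omega) hi)
    | i + 1, j + 1 => exact congrArg (· + 1) (ih (F.extend c) (by simp; omega) (by simp; omega) h)

theorem sum_comp_rowingMap_sub {M : Type*} [AddCommGroup M] (b : List ℕ) {H H' : RootedGraph}
    (g : H'.V → H.V) (f : (H.rowing b).V → M) :
    ∑ v, f (rowingMap b g v) - ∑ v, f v
      = ∑ v, f (rowingIncl b H (g v)) - ∑ u, f (rowingIncl b H u) := by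
  induction b generalizing H H' with
  | nil => rfl
  | cons c b ih =>
    refine (ih (extendMap g c) f).trans ?_
    rw [sum_extend, sum_extend]
    simp only [extendMap_inl, extendMap_inr, add_sub_add_right_eq_sub]
    rfl

theorem adjForm_comp_rowingMap (b : List ℕ) {H H' : RootedGraph} (g : H'.V → H.V)
    (hg : g H'.root = H.root) (D : (H.V → ℝ) → ℝ)
    (hD : ∀ x, H'.adjForm (fun v => x (g v)) = H.adjForm x + D x) (x : (H.rowing b).V → ℝ) :
    (H'.rowing b).adjForm (fun v => x (rowingMap b g v))
      = (H.rowing b).adjForm x + D (fun u => x (rowingIncl b H u)) := by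
  induction b generalizing H H' with
  | nil => exact hD x
  | cons c b ih =>
    refine ih (extendMap g c) rfl (fun y => D fun u => y (Sum.inl u)) (fun y => ?_) x
    simp only [adjForm_extend, extendMap_inl, extendMap_inr, hg, hD fun u => y (Sum.inl u)]
    ring

def collapse (H : RootedGraph) : (H.extend 0).V → H.V :=
  Sum.elim id fun _ => H.root

theorem sum_comp_collapse {M : Type*} [AddCommMonoid M] (H : RootedGraph) (f : H.V → M) :
    ∑ v, f (H.collapse v) = ∑ u, f u + f H.root := by
  simp [sum_extend, collapse]

theorem adjForm_comp_collapse (H : RootedGraph) (x : H.V → ℝ) :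
    (H.extend 0).adjForm (fun v => x (H.collapse v)) = H.adjForm x + 2 * x H.root ^ 2 := by
  rw [adjForm_extend]
  simp [collapse]
  ring

theorem exists_testVector_rowing_insertZero (j : ℕ) (a : List ℕ) (F : RootedGraph) (hj : j ≤ a.length)
    (x : (F.rowing a).V → ℝ) :
    ∃ y : (F.rowing (a.take j ++ 0 :: a.drop j)).V → ℝ,
      ∑ v, y v ^ 2 = ∑ v, x v ^ 2 + x (pathVertex a F j) ^ 2 ∧
      (F.rowing (a.take j ++ 0 :: a.drop j)).adjForm y
        = (F.rowing a).adjForm x + 2 * x (pathVertex a F j) ^ 2 := by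
  induction j generalizing a F with
  | zero =>
    refine ⟨fun v => x (rowingMap a F.collapse v), ?_, ?_⟩
    · have := sum_comp_rowingMap_sub a F.collapse (fun v => x v ^ 2)
      rw [sum_comp_collapse F (fun u => x (rowingIncl a F u) ^ 2)] at this
      rw [pathVertex_zero]
      change ∑ v : ((F.extend 0).rowing a).V, x (rowingMap a F.collapse v) ^ 2 = _
      linarith
    · rw [pathVertex_zero]
      exact adjForm_comp_rowingMap a F.collapse rfl _ (adjForm_comp_collapse F) x
  | succ j ih =>
    match a with
    | [] => simp at hj
    | c :: a => exact ih a (F.extend c) (by simpa using hj) x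

theorem lam1_rowing_insertZero_mul_le (j : ℕ) (a : List ℕ) (F : RootedGraph) (hj : j ≤ a.length)
    (x : (F.rowing a).V → ℝ) :
    (F.rowing (a.take j ++ 0 :: a.drop j)).lam1 * (∑ v, x v ^ 2 + x (pathVertex a F j) ^ 2)
      ≤ (F.rowing a).adjForm x + 2 * x (pathVertex a F j) ^ 2 := by
  obtain ⟨y, hy_sum, hy_form⟩ := exists_testVector_rowing_insertZero j a F hj x
  rw [← hy_sum, ← hy_form]
  exact lam1_mul_sum_sq_le_adjForm _ y

theorem adjForm_rowing_ge (a : List ℕ) (H : RootedGraph) (x : (H.rowing a).V → ℝ) :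
    H.adjForm (fun u => x (rowingIncl a H u))
        - 2 * (∑ v, x v ^ 2 - ∑ u, x (rowingIncl a H u) ^ 2) - x (rowingIncl a H H.root) ^ 2
      ≤ (H.rowing a).adjForm x := by
  induction a generalizing H with
  | nil =>
    change H.adjForm x - 2 * (∑ v, x v ^ 2 - ∑ u, x u ^ 2) - x H.root ^ 2 ≤ H.adjForm x
    nlinarith [sq_nonneg (x H.root)]
  | cons c a ih =>
    have := ih (H.extend c) x
    rw [adjForm_extend, sum_extend (f := fun v => x (rowingIncl a (H.extend c) v) ^ 2)] at this
    change H.adjForm (fun u => x (rowingIncl a (H.extend c) (Sum.inl u)))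
        - 2 * (∑ v : ((H.extend c).rowing a).V, x v ^ 2
          - ∑ u, x (rowingIncl a (H.extend c) (Sum.inl u)) ^ 2)
        - x (rowingIncl a (H.extend c) (Sum.inl H.root)) ^ 2 ≤ ((H.extend c).rowing a).adjForm x
    set y : (H.extend c).V → ℝ := fun v => x (rowingIncl a (H.extend c) v)
    -- The new clique contributes `(y r + ∑ w)² - y r² - ∑ w² ≥ -y r² - ∑ w²`, and the new root is
    -- one of the `w`, so every vertex is charged at most twice.
    have hroot : y (H.extend c).root ^ 2 ≤ ∑ t, y (Sum.inr t) ^ 2 :=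
      Finset.single_le_sum (f := fun t => y (Sum.inr t) ^ 2) (fun _ _ => sq_nonneg _)
        (Finset.mem_univ none)
    nlinarith [sq_nonneg (y (Sum.inl H.root) + ∑ t, y (Sum.inr t))]

theorem sum_sq_rowingIncl_le (a : List ℕ) (H : RootedGraph) (x : (H.rowing a).V → ℝ) :
    ∑ u, x (rowingIncl a H u) ^ 2 ≤ ∑ v, x v ^ 2 := by
  classical
  rw [← Finset.sum_image (f := fun v => x v ^ 2) fun u _ w _ h => rowingIncl_injective a H h]
  exact Finset.sum_le_sum_of_subset_of_nonneg (Finset.subset_univ _) fun _ _ _ => sq_nonneg _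

theorem lam1_rowing_ge (a : List ℕ) (F : RootedGraph) : -(|F.lam1| + 2) ≤ (F.rowing a).lam1 := by
  obtain ⟨x, hN, hx_form⟩ := exists_adjForm_eq_lam1_mul (F.rowing a)
  set N := ∑ v, x v ^ 2
  set s := ∑ u, x (rowingIncl a F u) ^ 2
  have hsN : s ≤ N := sum_sq_rowingIncl_le a F x
  have hs : 0 ≤ s := Finset.sum_nonneg fun _ _ => sq_nonneg _
  have hroot : x (rowingIncl a F F.root) ^ 2 ≤ s :=
    Finset.single_le_sum (f := fun u => x (rowingIncl a F u) ^ 2) (fun _ _ => sq_nonneg _)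
      (Finset.mem_univ F.root)
  have hF := lam1_mul_sum_sq_le_adjForm F (fun u => x (rowingIncl a F u))
  have hrow := adjForm_rowing_ge a F x
  have habs : -|F.lam1| * N ≤ F.lam1 * s := by
    nlinarith [neg_abs_le F.lam1, abs_nonneg F.lam1]
  rw [hx_form] at hrow
  nlinarith

theorem exists_mul_sq_pathVertex_le (a : List ℕ) (F : RootedGraph) (x : (F.rowing a).V → ℝ)
    {m : ℕ} (hm : 0 < m) (hma : m ≤ a.length) :
    ∃ j < m, m * x (pathVertex a F j) ^ 2 ≤ ∑ v, x v ^ 2 := by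
  classical
  have hinj : Set.InjOn (pathVertex a F) (Finset.range m) := fun i hi j hj =>
    pathVertex_injOn a F (by simp at hi ⊢; omega) (by simp at hj ⊢; omega)
  have hsum : ∑ j ∈ Finset.range m, x (pathVertex a F j) ^ 2 ≤ ∑ v, x v ^ 2 := by
    rw [← Finset.sum_image (f := fun v => x v ^ 2) hinj]
    exact Finset.sum_le_sum_of_subset_of_nonneg (Finset.subset_univ _) fun _ _ _ => sq_nonneg _
  obtain ⟨j, hj, hle⟩ := Finset.exists_le_of_sum_le (Finset.nonempty_range_iff.mpr hm.ne')
    (f := fun j => (m : ℝ) * x (pathVertex a F j) ^ 2) (g := fun _ => ∑ v, x v ^ 2)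
    (by simpa [← Finset.mul_sum] using mul_le_mul_of_nonneg_left hsum (Nat.cast_nonneg m))
  exact ⟨j, Finset.mem_range.mp hj, hle⟩

end RootedGraph

/-- For every `ε > 0` and every rooted graph `F`, there exists a positive integer `m`
such that for every string `a = a₁…aₙ ∈ ℕⁿ` with `n ≥ m` there exists `k ∈ {1, …, m}`
with `λ₁(F, a₁…a_{k-1}0a_k…aₙ) < λ₁(F, a) + ε`. -/
theorem lam1_rowing_insert_zero (ε : ℝ) (hε : 0 < ε) (F : RootedGraph) :
    ∃ m : ℕ, 0 < m ∧ ∀ a : List ℕ, m ≤ a.length →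
      ∃ k : ℕ, 1 ≤ k ∧ k ≤ m ∧
        (F.rowing (a.take (k - 1) ++ 0 :: a.drop (k - 1))).lam1 <
          (F.rowing a).lam1 + ε := by
  set C := |F.lam1| + 4
  have hC : 0 < C := by positivity
  obtain ⟨m, hm⟩ := exists_nat_gt (C / ε)
  rw [div_lt_iff₀ hε] at hm
  have hm0 : 0 < m := by
    have : (0 : ℝ) < m := by nlinarith
    exact_mod_cast this
  refine ⟨m, hm0, fun a ha => ?_⟩
  obtain ⟨x, hN, hx_form⟩ := (F.rowing a).exists_adjForm_eq_lam1_mul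
  obtain ⟨j, hjm, hj⟩ := F.exists_mul_sq_pathVertex_le a x hm0 ha
  refine ⟨j + 1, by omega, hjm, ?_⟩
  rw [Nat.add_sub_cancel]
  have hins := F.lam1_rowing_insertZero_mul_le j a (by omega) x
  have hlow := F.lam1_rowing_ge a
  set t := x (F.pathVertex a j) ^ 2
  set N := ∑ v, x v ^ 2
  have ht : 0 ≤ t := sq_nonneg _
  have hCt : C * t < ε * N := by
    have : (m : ℝ) * (C * t) < m * (ε * N) := by nlinarith [mul_le_mul_of_nonneg_left hj hC.le]
    exact lt_of_mul_lt_mul_left this (Nat.cast_nonneg m)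
  have hgain : (F.rowing a).lam1 * N + 2 * t < ((F.rowing a).lam1 + ε) * (N + t) := by
    nlinarith [mul_le_mul_of_nonneg_right (show 2 - (F.rowing a).lam1 ≤ C by linarith) ht]
  rw [hx_form] at hins
  exact lt_of_mul_lt_mul_right (hins.trans_lt hgain) (by positivity)
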